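/- Let P and Q be holomorphic on an open neighborhood of the closed unit disk with Im P(0) = 0 and Im Q(0) = 0, and let w' ∈ 𝕌. Then (1/2π) ∫_𝕌 [ Re P(w) · V_Q(w,w') + Re Q(w) · V_P(w,w') ] dλ(w) = Re P(w')·Re Q(w') + Im P(w')·Im Q(w') − Re P(0)·Re Q(0). (In the paper's notation: (1/2π)(pV_q + qV_p) = pq + p̃q̃ − (mean of p)(mean of q), where p = Re P, q = Re Q, and p̃ = Im P, q̃ = Im Q are their harmonic conjugates normalized to vanish at 0.) -/

import Mathlib

noncomputable section

/-- The unit circle in `ℂ`. -/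
def unitCircle : Set ℂ := Metric.sphere 0 1

/-- The kernel `V_P(w,w') = Re(((w+w')/(w'−w))(P(w')−P(w)))`, with the removable singularity on
the diagonal filled by its limit `2 Re(w P′(w))`. -/
def Vfill (P : ℂ → ℂ) (w w' : ℂ) : ℝ :=
  if w = w' then 2 * (w * deriv P w).re
  else (((w + w') / (w' - w)) * (P w' - P w)).re

open Complex MeasureTheory intervalIntegral

private lemma Kre_aux (w w' : ℂ) (hw : ‖w‖ = 1) (hw' : ‖w'‖ = 1)
    (hne : w ≠ w') : ((w + w') / (w' - w)).re = 0 := by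
  have hd : w' - w ≠ 0 := sub_ne_zero.mpr (Ne.symm hne)
  have hdc : (starRingEnd ℂ) (w' - w) ≠ 0 := fun h => hd (by simpa using congrArg (starRingEnd ℂ) h)
  have h1 : w * (starRingEnd ℂ) w = 1 := by
    rw [Complex.mul_conj]; norm_cast; simp [Complex.normSq_eq_norm_sq, hw]
  have h2 : w' * (starRingEnd ℂ) w' = 1 := by
    rw [Complex.mul_conj]; norm_cast; simp [Complex.normSq_eq_norm_sq, hw']
  have key : (w + w') / (w' - w)
      = (w * (starRingEnd ℂ) w' - w' * (starRingEnd ℂ) w)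
        / ((w' - w) * (starRingEnd ℂ) (w' - w)) := by
    rw [div_eq_div_iff hd (mul_ne_zero hd hdc)]
    simp only [map_sub]
    linear_combination (w' - w) * h2 - (w' - w) * h1
  rw [key, Complex.mul_conj, Complex.div_ofReal_re]
  have : w * (starRingEnd ℂ) w' - w' * (starRingEnd ℂ) w
      = w * (starRingEnd ℂ) w' - (starRingEnd ℂ) (w * (starRingEnd ℂ) w') := by simp [mul_comm]
  rw [this, Complex.sub_conj]
  simp

private lemma point_aux (K a b p' q' : ℂ) (hK : K.re = 0) :
    a.re * (K * (q' - b)).re + b.re * (K * (p' - a)).re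
    = (K * ((I * q'.im * a + I * p'.im * b - a * b)
        - (I * q'.im * p' + I * p'.im * q' - p' * q'))).re := by
  simp only [Complex.mul_re, Complex.mul_im, Complex.sub_re, Complex.sub_im, Complex.add_re,
    Complex.add_im, Complex.I_re, Complex.I_im, Complex.ofReal_re, Complex.ofReal_im, hK]
  ring

/-- Symmetric contraction: `(1/2π) ∫_𝕌 (pV_q + qV_p)(w,w') dλ(w) = p(w')q(w') + p̃(w')q̃(w')
− (mean p)(mean q)` for `p = Re P`, `q = Re Q` with harmonic conjugates `p̃ = Im P`, `q̃ = Im Q`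
normalized to vanish at `0`. -/
theorem statement10 (P Q : ℂ → ℂ) (U : Set ℂ) (hU : IsOpen U)
    (hUc : Metric.closedBall (0 : ℂ) 1 ⊆ U)
    (hP : DifferentiableOn ℂ P U) (hQ : DifferentiableOn ℂ Q U)
    (hP0 : (P 0).im = 0) (hQ0 : (Q 0).im = 0)
    (w' : ℂ) (hw' : w' ∈ unitCircle) :
    (1 / (2 * Real.pi)) * ∫ θ in (0 : ℝ)..(2 * Real.pi),
        ((P (Complex.exp (θ * Complex.I))).re * Vfill Q (Complex.exp (θ * Complex.I)) w' +
          (Q (Complex.exp (θ * Complex.I))).re * Vfill P (Complex.exp (θ * Complex.I)) w') =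
      (P w').re * (Q w').re + (P w').im * (Q w').im - (P 0).re * (Q 0).re := by
  have hw'1 : ‖w'‖ = 1 := by
    simpa [unitCircle, Complex.dist_eq] using hw'
  have hw'0 : w' ≠ 0 := by
    intro h; rw [h] at hw'1; simp at hw'1
  have hw'U : w' ∈ U := hUc (Metric.sphere_subset_closedBall hw')
  set F : ℂ → ℂ := fun z =>
    I * ((Q w').im : ℂ) * P z + I * ((P w').im : ℂ) * Q z - P z * Q z with hFdef
  have hF : DifferentiableOn ℂ F U :=
    (((hP.const_mul _).add (hQ.const_mul _)).sub (hP.mul hQ))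
  have hD : DifferentiableOn ℂ (dslope F w') U :=
    (Complex.differentiableOn_dslope (hU.mem_nhds hw'U)).mpr hF
  set T : ℂ → ℂ := fun z => -(z + w') * dslope F w' z with hTdef
  have hT : DifferentiableOn ℂ T U :=
    ((differentiableOn_id.add (differentiableOn_const w')).neg).mul hD
  -- Cauchy: the mean of T over the circle is T 0
  have hTc : DiffContOnCl ℂ T (Metric.ball (0 : ℂ) 1) := by
    apply DifferentiableOn.diffContOnCl
    refine hT.mono ?_
    rw [closure_ball (0 : ℂ) one_ne_zero]
    exact hUc
  have cauchy := hTc.circleIntegral_sub_inv_smul (by simp : (0 : ℂ) ∈ Metric.ball (0 : ℂ) 1)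
  have expne : ∀ θ : ℝ, Complex.exp (θ * I) ≠ 0 := fun θ => Complex.exp_ne_zero _
  have mean : (∫ θ in (0:ℝ)..(2 * Real.pi), T (Complex.exp (θ * I)))
      = 2 * Real.pi * T 0 := by
    rw [circleIntegral] at cauchy
    simp only [deriv_circleMap, circleMap_zero, Complex.ofReal_one, one_mul, sub_zero, smul_eq_mul] at cauchy
    have : (∫ θ in (0:ℝ)..(2 * Real.pi),
        Complex.exp (θ * I) * I * ((Complex.exp (θ * I))⁻¹ * T (Complex.exp (θ * I))))
        = ∫ θ in (0:ℝ)..(2 * Real.pi), I * T (Complex.exp (θ * I)) := by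
      apply intervalIntegral.integral_congr
      intro θ _
      field_simp [expne θ]
    rw [this, intervalIntegral.integral_const_mul] at cauchy
    have := mul_left_cancel₀ Complex.I_ne_zero (by linear_combination cauchy :
      I * (∫ θ in (0:ℝ)..(2 * Real.pi), T (Complex.exp (θ * I))) = I * (2 * Real.pi * T 0))
    exact this
  -- continuity and integrability
  have hexp : Continuous fun θ : ℝ => Complex.exp (θ * I) :=
    Complex.continuous_exp.comp ((Complex.continuous_ofReal.mul continuous_const))
  have hmem : ∀ θ : ℝ, Complex.exp ((θ : ℂ) * I) ∈ U := fun θ => by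
    apply hUc
    simp [Metric.mem_closedBall, Complex.dist_eq, Complex.norm_exp_ofReal_mul_I]
  have hTcont : Continuous fun θ : ℝ => T (Complex.exp (θ * I)) :=
    (hT.continuousOn.mono (le_refl _)).comp_continuous hexp hmem
  have hInt : IntervalIntegrable (fun θ : ℝ => T (Complex.exp (θ * I))) volume 0 (2 * Real.pi) :=
    hTcont.intervalIntegrable _ _
  -- the set where exp (θ I) = w' is null
  have hS : (∀ᵐ θ : ℝ, Complex.exp ((θ : ℂ) * I) ≠ w') := by
    have hc : {θ : ℝ | Complex.exp ((θ : ℂ) * I) = w'}.Countable := by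
      rcases Set.eq_empty_or_nonempty {θ : ℝ | Complex.exp ((θ : ℂ) * I) = w'} with h | h
      · rw [h]; exact Set.countable_empty
      · obtain ⟨θ₀, hθ₀⟩ := h
        apply Set.Countable.mono _ (Set.countable_range fun n : ℤ => θ₀ + n * (2 * Real.pi))
        intro θ hθ
        have h1 : Complex.exp ((θ : ℂ) * I - (θ₀ : ℂ) * I) = 1 := by
          rw [Complex.exp_sub, hθ, hθ₀, div_self hw'0]
        rw [Complex.exp_eq_one_iff] at h1
        obtain ⟨n, hn⟩ := h1
        have h2 : ((θ - θ₀ : ℝ) : ℂ) * I = ((n * (2 * Real.pi) : ℝ) : ℂ) * I := by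
          push_cast
          linear_combination hn
        have h3 := Complex.ofReal_inj.mp (mul_right_cancel₀ Complex.I_ne_zero h2)
        exact ⟨n, by show θ₀ + (n : ℝ) * (2 * Real.pi) = θ; linarith⟩
    rw [MeasureTheory.ae_iff]
    simpa using hc.measure_zero volume
  -- a.e. the integrand equals Re ∘ T ∘ exp
  have congr_ae : (∫ θ in (0:ℝ)..(2 * Real.pi),
        ((P (Complex.exp (θ * Complex.I))).re * Vfill Q (Complex.exp (θ * Complex.I)) w' +
          (Q (Complex.exp (θ * Complex.I))).re * Vfill P (Complex.exp (θ * Complex.I)) w'))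
      = ∫ θ in (0:ℝ)..(2 * Real.pi), (T (Complex.exp (θ * I))).re := by
    apply intervalIntegral.integral_congr_ae
    filter_upwards [hS] with θ hθ _
    set w : ℂ := Complex.exp ((θ : ℂ) * I) with hwdef
    have hwne : w ≠ w' := hθ
    have hw1 : ‖w‖ = 1 := Complex.norm_exp_ofReal_mul_I θ
    have hKre : ((w + w') / (w' - w)).re = 0 := Kre_aux w w' hw1 hw'1 hwne
    rw [Vfill, Vfill, if_neg hwne, if_neg hwne]
    have hpt := point_aux ((w + w') / (w' - w)) (P w) (Q w) (P w') (Q w') hKre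
    rw [hpt]
    -- now show T w = K * (F w - F w')
    have hTw : T w = ((w + w') / (w' - w)) * (F w - F w') := by
      rw [hTdef]
      simp only
      rw [dslope_of_ne _ hwne, slope_def_field]
      field_simp [sub_ne_zero.mpr hwne, sub_ne_zero.mpr (Ne.symm hwne)]
      ring
    rw [hTw, hFdef]
  have hre : (∫ θ in (0:ℝ)..(2 * Real.pi), (T (Complex.exp (θ * I))).re)
      = (∫ θ in (0:ℝ)..(2 * Real.pi), T (Complex.exp (θ * I))).re := by
    simpa using (Complex.reCLM.intervalIntegral_comp_comm hInt)
  -- compute T 0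
  have hT0 : (T 0).re = (P w').re * (Q w').re + (P w').im * (Q w').im
      - (P 0).re * (Q 0).re := by
    have h0ne : (0 : ℂ) ≠ w' := fun h => hw'0 h.symm
    have : T 0 = F 0 - F w' := by
      rw [hTdef]
      simp only
      rw [dslope_of_ne _ h0ne, slope_def_field]
      field_simp
      ring
    rw [this, hFdef]
    simp only [Complex.sub_re, Complex.add_re, Complex.mul_re, Complex.mul_im, Complex.I_re,
      Complex.I_im, Complex.ofReal_re, Complex.ofReal_im, hP0, hQ0]
    ring
  rw [congr_ae, hre, mean]
  have h2π : ((2 : ℂ) * (Real.pi : ℂ) * T 0).re = 2 * Real.pi * (T 0).re := by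
    have h : (2 : ℂ) * (Real.pi : ℂ) = ((2 * Real.pi : ℝ) : ℂ) := by push_cast; ring
    rw [h, Complex.re_ofReal_mul]
  rw [h2π, hT0]
  have hπ : (2 * Real.pi) ≠ 0 := by positivity
  field_simp
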